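/- arXiv:1703.10205 — 4 statements merged into one kernel-verified Lean document; each statement's English description precedes it below -/
import Mathlib

section
/- For every k ≥ 1, vectors u_1, …, u_k ∈ [0, 1]^N with U_i = diag(u_i), and matrices T_1, …, T_{k−1} ∈ ℝ^{N×N}, we have ‖U_1 T_1 U_2 T_2 ⋯ T_{k−1} U_k 𝟏‖_1 ≤ √(‖u_1‖_1 · ‖u_k‖_1) · ∏_{i=1}^{k−1} ‖T_i‖, where ‖v‖_1 = (|v_1| + ⋯ + |v_N|)/N is the normalized 1-norm, 𝟏 is the all-ones vector, diag(u) is the diagonal matrix with diagonal entries u, and ‖T‖ is the operator norm of T with respect to the Euclidean norm. -/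
open Finset

/-- The normalized 1-norm of a vector: `(|v_1| + ⋯ + |v_N|)/N`. -/
noncomputable def norm1 {N : Type*} [Fintype N] (v : N → ℝ) : ℝ :=
  (∑ i, |v i|) / (Fintype.card N : ℝ)

/-- The operator norm of a matrix with respect to the Euclidean norm. -/
noncomputable def opNorm {N : Type*} [Fintype N] [DecidableEq N]
    (M : Matrix N N ℝ) : ℝ :=
  ‖LinearMap.toContinuousLinearMap (Matrix.toEuclideanLin M)‖

/-- The alternating product `U_0 T_0 U_1 T_1 ⋯ T_{m-1} U_m` of `m + 1` matrices `U_i`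
with `m` matrices `T_i` interspersed between consecutive factors. -/
noncomputable def altProd {N : Type*} [Fintype N] [DecidableEq N] :
    (m : ℕ) → (Fin (m + 1) → Matrix N N ℝ) → (Fin m → Matrix N N ℝ) → Matrix N N ℝ
  | 0, U, _ => U 0
  | m + 1, U, T => U 0 * T 0 * altProd m (fun i => U i.succ) (fun i => T i.succ)

/-!
Write the vector as `U_1 w` with `w = T_1 U_2 ⋯ U_k 𝟏`. Its unnormalized 1-norm is
`∑ u_1(j) |w_j| ≤ ‖u_1‖₂ ‖w‖₂` by Cauchy–Schwarz. Every `U_i` is an `ℓ²`-contraction, so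
`‖w‖₂ ≤ ∏ ‖T_i‖ · ‖u_k‖₂`, and `‖u‖₂ ≤ (∑ u(j))^{1/2}` because `u(j)² ≤ u(j)` on `[0, 1]`.
Dividing by `N` gives the normalized bound; for `k = 1` both sides are `‖u_1‖_1`.
-/

open scoped Matrix.Norms.L2Operator
open WithLp Matrix

section
variable {N : Type*} [Fintype N]

lemma opNorm_eq_l2_opNorm [DecidableEq N] (M : Matrix N N ℝ) : opNorm M = ‖M‖ := rfl

lemma norm_toLp_mulVec_le {M : Type*} [Fintype M] [DecidableEq N] (A : Matrix M N ℝ)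
    (x : N → ℝ) : ‖toLp 2 (A *ᵥ x)‖ ≤ ‖A‖ * ‖toLp 2 x‖ :=
  A.l2_opNorm_mulVec (toLp 2 x)

lemma norm1_of_nonneg {v : N → ℝ} (hv : ∀ j, 0 ≤ v j) :
    norm1 v = (∑ j, v j) / Fintype.card N := by
  simp only [norm1, abs_of_nonneg (hv _)]

lemma norm_toLp_le_sqrt_sum {v : N → ℝ} (hv : ∀ j, v j ∈ Set.Icc (0 : ℝ) 1) :
    ‖toLp 2 v‖ ≤ √(∑ j, v j) := by
  rw [EuclideanSpace.norm_eq]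
  gcongr with j
  rw [Real.norm_eq_abs, sq_abs, sq]
  exact mul_le_of_le_one_left (hv j).1 (hv j).2

lemma sum_mul_abs_le_norm_toLp_mul_norm_toLp (v w : N → ℝ) :
    ∑ i, v i * |w i| ≤ ‖toLp 2 v‖ * ‖toLp 2 w‖ := by
  simpa [EuclideanSpace.norm_eq] using Real.sum_mul_le_sqrt_mul_sqrt univ v fun i => |w i|

variable [DecidableEq N]

lemma diagonal_mulVec_one (v : N → ℝ) : (diagonal v *ᵥ fun _ => 1) = v :=
  funext fun j => by simp [mulVec_diagonal]

lemma l2_opNorm_diagonal_le_one {v : N → ℝ} (hv : ∀ j, |v j| ≤ 1) : ‖diagonal v‖ ≤ 1 := by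
  rw [l2_opNorm_diagonal]
  exact pi_norm_le_iff_of_nonneg zero_le_one |>.2 hv

lemma norm_toLp_altProd_mulVec_le (m : ℕ) (U : Fin (m + 1) → Matrix N N ℝ)
    (hU : ∀ i : Fin m, ‖U i.castSucc‖ ≤ 1) (T : Fin m → Matrix N N ℝ) (x : N → ℝ) :
    ‖toLp 2 (altProd m U T *ᵥ x)‖ ≤ (∏ i, ‖T i‖) * ‖toLp 2 (U (Fin.last m) *ᵥ x)‖ := by
  induction m with
  | zero => simp [altProd]
  | succ n ih =>
    have hUT : ‖U 0 * T 0‖ ≤ ‖T 0‖ :=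
      (l2_opNorm_mul _ _).trans (mul_le_of_le_one_left (norm_nonneg _) (hU 0))
    have htail := ih (fun i => U i.succ) (fun i => by simpa using hU i.succ) (fun i => T i.succ)
    rw [Fin.succ_last] at htail
    calc ‖toLp 2 (altProd (n + 1) U T *ᵥ x)‖
        ≤ ‖U 0 * T 0‖ * ‖toLp 2 (altProd n (fun i => U i.succ) (fun i => T i.succ) *ᵥ x)‖ := by
          rw [altProd, ← mulVec_mulVec]; exact norm_toLp_mulVec_le _ _
      _ ≤ ‖T 0‖ * ((∏ i : Fin n, ‖T i.succ‖) * ‖toLp 2 (U (Fin.last (n + 1)) *ᵥ x)‖) := by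
          gcongr
      _ = _ := by rw [Fin.prod_univ_succ, mul_assoc]

lemma sum_abs_altProd_diagonal_mulVec_one_le (m : ℕ) (u : Fin (m + 1) → N → ℝ)
    (hu : ∀ i j, u i j ∈ Set.Icc (0 : ℝ) 1) (T : Fin m → Matrix N N ℝ) :
    ∑ j, |(altProd m (fun i => diagonal (u i)) T *ᵥ fun _ => 1) j| ≤
      √(∑ j, u 0 j) * √(∑ j, u (Fin.last m) j) * ∏ i, ‖T i‖ := by
  cases m with
  | zero =>
    have hsum : 0 ≤ ∑ j, u 0 j := sum_nonneg fun j _ => (hu 0 j).1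
    simp [altProd, diagonal_mulVec_one, abs_of_nonneg (hu 0 _).1, Real.mul_self_sqrt hsum]
  | succ n =>
    have hcontr (i : Fin (n + 2)) : ‖diagonal (u i)‖ ≤ 1 :=
      l2_opNorm_diagonal_le_one fun j => abs_le.2 ⟨by linarith [(hu i j).1], (hu i j).2⟩
    set w := T 0 *ᵥ (altProd n (fun i => diagonal (u i.succ)) (fun i => T i.succ) *ᵥ fun _ => 1)
    have hw : ‖toLp 2 w‖ ≤ (∏ i, ‖T i‖) * √(∑ j, u (Fin.last (n + 1)) j) := by
      calc ‖toLp 2 w‖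
          ≤ ‖T 0‖ * ((∏ i : Fin n, ‖T i.succ‖) * ‖toLp 2 (u (Fin.last (n + 1)))‖) := by
            refine (norm_toLp_mulVec_le _ _).trans ?_
            gcongr
            simpa [Fin.succ_last, diagonal_mulVec_one] using
              norm_toLp_altProd_mulVec_le n (fun i => diagonal (u i.succ))
                (fun i => hcontr _) (fun i => T i.succ) fun _ => 1
        _ ≤ _ := by
            rw [Fin.prod_univ_succ, ← mul_assoc]
            gcongr
            exact norm_toLp_le_sqrt_sum (hu _)
    calc ∑ j, |(altProd (n + 1) (fun i => diagonal (u i)) T *ᵥ fun _ => 1) j|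
        = ∑ j, u 0 j * |w j| := by
          simp [altProd, w, ← mulVec_mulVec, mulVec_diagonal, abs_mul, abs_of_nonneg (hu 0 _).1]
      _ ≤ ‖toLp 2 (u 0)‖ * ‖toLp 2 w‖ := sum_mul_abs_le_norm_toLp_mul_norm_toLp _ _
      _ ≤ √(∑ j, u 0 j) * ((∏ i, ‖T i‖) * √(∑ j, u (Fin.last (n + 1)) j)) := by
          gcongr
          exact norm_toLp_le_sqrt_sum (hu 0)
      _ = _ := by ring

end

theorem diag_chain_norm1_bound_general {N : Type*} [Fintype N] [DecidableEq N]
    (m : ℕ) (u : Fin (m + 1) → N → ℝ) (hu : ∀ i j, u i j ∈ Set.Icc (0 : ℝ) 1)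
    (T : Fin m → Matrix N N ℝ) :
    norm1 ((altProd m (fun i => Matrix.diagonal (u i)) T).mulVec fun _ => (1 : ℝ)) ≤
      Real.sqrt (norm1 (u 0) * norm1 (u (Fin.last m))) * ∏ i, opNorm (T i) := by
  have hN : (0 : ℝ) ≤ Fintype.card N := Nat.cast_nonneg _
  have hsum (i) : 0 ≤ ∑ j, u i j := sum_nonneg fun j _ => (hu i j).1
  rw [norm1_of_nonneg fun j => (hu 0 j).1, norm1_of_nonneg fun j => (hu _ j).1,
    div_mul_div_comm, Real.sqrt_div (mul_nonneg (hsum 0) (hsum _)), Real.sqrt_mul (hsum 0),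
    Real.sqrt_mul_self hN, div_mul_eq_mul_div, norm1]
  simp only [opNorm_eq_l2_opNorm]
  gcongr
  exact sum_abs_altProd_diagonal_mulVec_one_le m u hu T

theorem diag_chain_norm1_bound {N : Type*} [Fintype N] [DecidableEq N] [Nonempty N]
    (m : ℕ) (u : Fin (m + 1) → N → ℝ) (hu : ∀ i j, u i j ∈ Set.Icc (0 : ℝ) 1)
    (T : Fin m → Matrix N N ℝ) :
    norm1 ((altProd m (fun i => Matrix.diagonal (u i)) T).mulVec fun _ => (1 : ℝ)) ≤
      Real.sqrt (norm1 (u 0) * norm1 (u (Fin.last m))) * ∏ i, opNorm (T i) :=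
  diag_chain_norm1_bound_general m u hu T
end

section
/- Let G = (V, E) be a finite regular undirected graph with normalized adjacency matrix A and λ = ‖A − J‖. Let f_1, …, f_n : V → [0, 1] with μ_i = E_{v uniform}[f_i(v)]. Let (Y_1, …, Y_n) be the simple random walk on G and Z_i = f_i(Y_i). Then for all k ≥ 1 and all w ∈ [n]^k with w_1 ≤ w_2 ≤ ⋯ ≤ w_k, E[Z_{w_1} Z_{w_2} ⋯ Z_{w_k}] ≤ √(μ_{w_1} μ_{w_k}) · ∏_{i=1}^{k−1} ((1 − λ^{w_{i+1} − w_i}) √(μ_{w_i} μ_{w_{i+1}}) + λ^{w_{i+1} − w_i}). -/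
open Finset

/-- The probability of a trajectory `y` of the simple random walk of length `n` on a
regular graph with normalized adjacency matrix `A`. -/
noncomputable def walkProb {V : Type*} [Fintype V] (A : Matrix V V ℝ) {n : ℕ}
    (y : Fin n → V) : ℝ :=
  if n = 0 then 1
  else (1 / (Fintype.card V : ℝ)) *
    ∏ i : Fin n, if h : (i : ℕ) + 1 < n then A (y i) (y ⟨(i : ℕ) + 1, h⟩) else 1

/-- Expectation of a function of the trajectory of the simple random walk. -/
noncomputable def walkExp {V : Type*} [Fintype V] (A : Matrix V V ℝ) {n : ℕ}
    (F : (Fin n → V) → ℝ) : ℝ :=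
  ∑ y : Fin n → V, walkProb A y * F y

/-!
Write `D_h` for the diagonal matrix of `h`, `N = |V|`, `J` for the averaging matrix and
`t_i = w_{i+1} - w_i`. Since `A` is doubly stochastic, summing out the positions of the walk that
carry no factor leaves `N⁻¹ ⟨1, D_{h_0} A^{t_1} D_{h_1} ⋯ A^{t_m} D_{h_m} 1⟩` with `h_j = f_{w_j}`.
Writing `D_h = D_s²` with `s = √h` turns this into `N⁻¹ ⟨s_0, B_1 ⋯ B_m s_m⟩` with the blocks
`B_i = D_{s_{i-1}} A^{t_i} D_{s_i}`, so by Cauchy–Schwarz it is at most `N⁻¹ ‖s_0‖ ‖s_m‖ ∏ ‖B_i‖`,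
where `‖s_j‖² = N μ_{w_j}`.

For a block, split `A^t = (1 - λ^t) J + (A^t - (1 - λ^t) J)`. The rank-one part `D_a J D_b` has
norm at most `‖a‖ ‖b‖ / N`. For `t ≥ 1` the rest is `(A - J)^t + λ^t J`, where `(A - J)^t` has
norm at most `λ^t` and is annihilated on both sides by the orthogonal projection `J`, so the sum
acts on `ker J ⊕ range J` as a direct sum of two operators of norm at most `λ^t`.
-/

open Matrix WithLp
open scoped InnerProductSpace Matrix.Norms.L2Operator

theorem ContinuousLinearMap.norm_add_smul_le_of_isStarProjection {E : Type*}
    [NormedAddCommGroup E] [InnerProductSpace ℝ E] [CompleteSpace E] {T P : E →L[ℝ] E}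
    (hP : IsStarProjection P) (hTP : T * P = 0) (hPT : P * T = 0) {γ : ℝ} (hT : ‖T‖ ≤ γ) :
    ‖T + γ • P‖ ≤ γ := by
  have hγ : 0 ≤ γ := (norm_nonneg T).trans hT
  refine opNorm_le_bound _ hγ fun x => ?_
  have hsymm : ∀ y z, ⟪P y, z⟫_ℝ = ⟪y, P z⟫_ℝ := hP.isSelfAdjoint.isSymmetric
  have hPP : P (P x) = P x := congr($(hP.isIdempotentElem.eq) x)
  have hTPx : T (P x) = 0 := congr($hTP x)
  have hPTx : ∀ y, P (T y) = 0 := fun y => congr($hPT y)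
  -- both `x = (x - P x) + P x` and the image below are orthogonal decompositions
  have hx : (T + γ • P) x = T (x - P x) + γ • P x := by simp [hTPx]
  have hker : ⟪x - P x, P x⟫_ℝ = 0 := by
    rw [inner_sub_left, hsymm, hPP, sub_self]
  have hTker : ⟪T (x - P x), γ • P x⟫_ℝ = 0 := by
    rw [real_inner_smul_right, ← hsymm, hPTx, inner_zero_left, mul_zero]
  have hTv : ‖T (x - P x)‖ ≤ γ * ‖x - P x‖ := (T.le_opNorm _).trans (by gcongr)
  have hx2 := norm_add_sq_eq_norm_sq_add_norm_sq_real hker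
  rw [sub_add_cancel] at hx2
  rw [hx, ← sq_le_sq₀ (norm_nonneg _) (by positivity), sq, sq,
    norm_add_sq_eq_norm_sq_add_norm_sq_real hTker, norm_smul, Real.norm_of_nonneg hγ]
  have hTv2 := mul_le_mul hTv hTv (norm_nonneg _) (by positivity)
  linear_combination hTv2 - γ ^ 2 * hx2

theorem Matrix.l2_opNorm_add_smul_le_of_isStarProjection {n : Type*} [Fintype n]
    [DecidableEq n] {T P : Matrix n n ℝ} (hP : IsStarProjection P) (hTP : T * P = 0)
    (hPT : P * T = 0) {γ : ℝ} (hT : ‖T‖ ≤ γ) : ‖T + γ • P‖ ≤ γ := by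
  have := ContinuousLinearMap.norm_add_smul_le_of_isStarProjection
    (T := toEuclideanCLM (𝕜 := ℝ) T) (hP.map toEuclideanCLM)
    (by rw [← map_mul, hTP, map_zero]) (by rw [← map_mul, hPT, map_zero]) hT
  rwa [← map_smul, ← map_add] at this

lemma SimpleGraph.IsRegularOfDegree.mem_doublyStochastic {V : Type*} [Fintype V]
    [DecidableEq V] {G : SimpleGraph V} [DecidableRel G.Adj] {d : ℕ}
    (hreg : G.IsRegularOfDegree d) (hd : 0 < d) {A : Matrix V V ℝ}
    (hA : ∀ u v, A u v = if G.Adj u v then (1 : ℝ) / d else 0) :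
    A ∈ doublyStochastic ℝ V := by
  have hrow : ∀ u, ∑ v, A u v = 1 := fun u => by
    rw [sum_congr rfl fun v _ => hA u v, sum_ite, sum_const_zero, add_zero, sum_const,
      ← neighborFinset_eq_filter, card_neighborFinset_eq_degree, hreg u, nsmul_eq_mul]
    exact mul_one_div_cancel (by positivity)
  refine mem_doublyStochastic_iff_sum.mpr ⟨fun u v => ?_, hrow, fun v => ?_⟩
  · rw [hA]
    split_ifs <;> positivity
  · simpa only [hA, G.adj_comm] using hrow v

namespace ExpanderWalk

variable {V : Type*}

def monomialWeight {k : ℕ} (p : Fin k → ℕ) (h : Fin k → V → ℝ) (i : ℕ) : V → ℝ :=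
  ∏ j with p j = i, h j

lemma monomialWeight_eq_one {k : ℕ} {p : Fin k → ℕ} (h : Fin k → V → ℝ) {i : ℕ}
    (hi : ∀ j, p j ≠ i) : monomialWeight p h i = 1 := by
  simp [monomialWeight, hi]

lemma monomialWeight_succ {k : ℕ} (p : Fin (k + 1) → ℕ) (h : Fin (k + 1) → V → ℝ) (i : ℕ) :
    monomialWeight p h i =
      (if p 0 = i then h 0 else 1) * monomialWeight (Fin.tail p) (Fin.tail h) i := by
  rw [monomialWeight, prod_filter, Fin.prod_univ_succ, monomialWeight, prod_filter]
  rfl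

lemma prod_eq_prod_monomialWeight {n k : ℕ} (w : Fin k → Fin n) (h : Fin k → V → ℝ)
    (y : Fin n → V) :
    ∏ j, h j (y (w j)) = ∏ i : Fin n, monomialWeight (fun j => (w j : ℕ)) h i (y i) := by
  rw [← prod_fiberwise univ w]
  refine prod_congr rfl fun i _ => ?_
  simp only [monomialWeight, Fin.val_inj, prod_apply]
  exact prod_congr rfl fun j hj => by rw [(mem_filter.mp hj).2]

def pathWeight (A : Matrix V V ℝ) {n : ℕ} (y : Fin (n + 1) → V) : ℝ :=
  ∏ i : Fin n, A (y i.castSucc) (y i.succ)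

lemma pathWeight_cons (A : Matrix V V ℝ) {n : ℕ} (v : V) (z : Fin (n + 1) → V) :
    pathWeight A (Fin.cons v z : Fin (n + 2) → V) = A v (z 0) * pathWeight A z := by
  simp [pathWeight, Fin.prod_univ_succ]

variable [Fintype V]

lemma sum_pi_fin_succ {β : Type*} [AddCommMonoid β] {n : ℕ} (F : (Fin (n + 1) → V) → β) :
    ∑ y, F y = ∑ v, ∑ z : Fin n → V, F (Fin.cons v z) := by
  rw [← (Fin.consEquiv fun _ => V).sum_comp, Fintype.sum_prod_type]
  rfl

lemma walkProb_eq (A : Matrix V V ℝ) {n : ℕ} (y : Fin (n + 1) → V) :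
    walkProb A y = pathWeight A y / Fintype.card V := by
  rw [walkProb, if_neg n.succ_ne_zero, Fin.prod_univ_castSucc, pathWeight]
  simp only [Fin.val_last, lt_irrefl, dite_false, mul_one, Fin.val_castSucc,
    add_lt_add_iff_right, Fin.is_lt, dite_true]
  rw [one_div_mul_eq_div]
  congr 1

noncomputable def transfer (A : Matrix V V ℝ) : ℕ → (ℕ → V → ℝ) → V → ℝ
  | 0, _ => 1
  | ℓ + 1, g => g 0 * A *ᵥ transfer A ℓ (fun i => g (i + 1))

lemma transfer_succ (A : Matrix V V ℝ) (ℓ : ℕ) (g : ℕ → V → ℝ) :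
    transfer A (ℓ + 1) g = g 0 * A *ᵥ transfer A ℓ (fun i => g (i + 1)) := rfl

lemma transfer_eq_one {A : Matrix V V ℝ} (hA : A *ᵥ 1 = 1) (ℓ : ℕ) :
    transfer A ℓ (fun _ => 1) = 1 := by
  induction ℓ with
  | zero => rfl
  | succ ℓ ih => rw [transfer_succ, ih, hA, one_mul]

lemma sum_pathWeight_mul_prod_eq_transfer {A : Matrix V V ℝ} (hA : A *ᵥ 1 = 1) (n : ℕ)
    (g : ℕ → V → ℝ) (v : V) :
    ∑ z : Fin n → V, pathWeight A (Fin.cons v z : Fin (n + 1) → V) *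
      ∏ i : Fin (n + 1), g i ((Fin.cons v z : Fin (n + 1) → V) i) = transfer A (n + 1) g v := by
  induction n generalizing g v with
  | zero => simp [pathWeight, transfer, hA]
  | succ n ih =>
    rw [transfer_succ, Pi.mul_apply, mulVec, dotProduct, sum_pi_fin_succ, mul_sum]
    refine sum_congr rfl fun u _ => ?_
    rw [← ih, mul_sum, mul_sum]
    refine sum_congr rfl fun z _ => ?_
    rw [pathWeight_cons, Fin.prod_univ_succ]
    simp only [Fin.cons_zero, Fin.cons_succ, Fin.val_zero, Fin.val_succ]
    ring

lemma walkExp_prod_eq_transfer {A : Matrix V V ℝ} (hA : A *ᵥ 1 = 1) {n : ℕ}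
    (g : ℕ → V → ℝ) :
    walkExp A (fun y : Fin (n + 1) → V => ∏ i : Fin (n + 1), g i (y i)) =
      (∑ v, transfer A (n + 1) g v) / Fintype.card V := by
  simp only [walkExp, walkProb_eq, div_mul_eq_mul_div, ← sum_div, sum_pi_fin_succ (n := n),
    ← sum_pathWeight_mul_prod_eq_transfer hA]

lemma transfer_succ_ite_zero_mul (A : Matrix V V ℝ) (k : ℕ) (φ : V → ℝ) (g : ℕ → V → ℝ) :
    transfer A (k + 1) (fun i => (if i = 0 then φ else 1) * g i) =
      φ * transfer A (k + 1) g := by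
  simp only [transfer_succ, if_true, Nat.add_one_ne_zero, if_false, one_mul, mul_assoc]

lemma transfer_succ_monomialWeight (A : Matrix V V ℝ) {m : ℕ} (p : Fin (m + 1) → ℕ)
    (h : Fin (m + 1) → V → ℝ) (k : ℕ) :
    transfer A (k + 1) (fun i => monomialWeight p h (i + p 0)) =
      h 0 * transfer A (k + 1) (fun i => monomialWeight (Fin.tail p) (Fin.tail h) (i + p 0)) := by
  simp only [monomialWeight_succ p, Nat.right_eq_add, ← transfer_succ_ite_zero_mul]

lemma norm_toLp_eq (x : V → ℝ) : ‖toLp 2 x‖ = √(∑ v, x v ^ 2) := by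
  simp [EuclideanSpace.norm_eq]

lemma sum_mul_le_norm_toLp_mul_norm_toLp (x y : V → ℝ) :
    ∑ v, x v * y v ≤ ‖toLp 2 x‖ * ‖toLp 2 y‖ := by
  rw [norm_toLp_eq, norm_toLp_eq]
  exact Real.sum_mul_le_sqrt_mul_sqrt _ _ _

noncomputable def averagingMatrix (V : Type*) [Fintype V] : Matrix V V ℝ :=
  of fun _ _ => 1 / Fintype.card V

lemma isStarProjection_averagingMatrix [Nonempty V] : IsStarProjection (averagingMatrix V) := by
  refine isStarProjection_iff'.mpr ⟨?_, ?_⟩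
  · ext u v
    simp only [averagingMatrix, mul_apply, of_apply, sum_const, card_univ, nsmul_eq_mul]
    field_simp
  · ext u v
    simp [averagingMatrix]

variable [DecidableEq V]

lemma transfer_add_of_eq_one (A : Matrix V V ℝ) {a : ℕ} {g : ℕ → V → ℝ}
    (hg : ∀ i < a, g i = 1) (k : ℕ) :
    transfer A (a + k) g = A ^ a *ᵥ transfer A k (fun i => g (i + a)) := by
  induction a generalizing g with
  | zero => simp
  | succ a ih =>
    rw [Nat.add_right_comm, transfer_succ, hg 0 a.succ_pos, one_mul,
      ih fun i hi => hg (i + 1) (by omega), pow_succ', ← mulVec_mulVec]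
    simp only [Nat.add_assoc]

noncomputable def chainVec (A : Matrix V V ℝ) :
    (m : ℕ) → (Fin (m + 1) → ℕ) → (Fin (m + 1) → V → ℝ) → V → ℝ
  | 0, _, h => h 0
  | m + 1, p, h => h 0 * (A ^ (p 1 - p 0)) *ᵥ chainVec A m (Fin.tail p) (Fin.tail h)

lemma transfer_monomialWeight_eq_chainVec {A : Matrix V V ℝ} (hA : A *ᵥ 1 = 1) (m : ℕ)
    {p : Fin (m + 1) → ℕ} (hp : Monotone p) (h : Fin (m + 1) → V → ℝ) {k : ℕ}
    (hk : p (Fin.last m) < p 0 + k) :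
    transfer A k (fun i => monomialWeight p h (i + p 0)) = chainVec A m p h := by
  obtain ⟨k, rfl⟩ : ∃ k', k = k' + 1 :=
    ⟨k - 1, by have := hp (Fin.zero_le (Fin.last m)); omega⟩
  rw [transfer_succ_monomialWeight]
  induction m generalizing k with
  | zero =>
    have hone : (fun i => monomialWeight (Fin.tail p) (Fin.tail h) (i + p 0)) = fun _ => 1 :=
      funext fun i => monomialWeight_eq_one _ fun j => j.elim0
    rw [hone, transfer_eq_one hA, mul_one]
    rfl
  | succ m ih =>
    rw [chainVec]
    congr 1
    have htail : Monotone (Fin.tail p) := fun i j hij => hp (Fin.succ_le_succ_iff.mpr hij)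
    have h01 : p 0 ≤ p 1 := hp (Fin.zero_le 1)
    have h1last : p 1 ≤ p (Fin.last (m + 1)) := hp (Fin.le_last 1)
    have hbefore : ∀ i < p 1 - p 0, monomialWeight (Fin.tail p) (Fin.tail h) (i + p 0) = 1 :=
      fun i hi => monomialWeight_eq_one _ fun j => by
        have : p 1 ≤ Fin.tail p j := htail (Fin.zero_le j)
        omega
    obtain ⟨ℓ, hℓ⟩ : ∃ ℓ, k + 1 = p 1 - p 0 + (ℓ + 1) := ⟨k - (p 1 - p 0), by omega⟩
    have hshift : ∀ i, i + (p 1 - p 0) + p 0 = i + Fin.tail p 0 := fun i => by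
      simp only [Fin.tail, Fin.succ_zero_eq_one]
      omega
    rw [hℓ, transfer_add_of_eq_one A hbefore]
    simp only [hshift]
    rw [transfer_succ_monomialWeight]
    congr 1
    refine ih htail (Fin.tail h) ℓ ?_
    simp only [Fin.tail, Fin.succ_last, Fin.succ_zero_eq_one, Nat.succ_eq_add_one]
    omega

lemma walkExp_prod_eq_chainVec {A : Matrix V V ℝ} (hA : A ∈ doublyStochastic ℝ V) {n m : ℕ}
    {w : Fin (m + 1) → Fin n} (hw : Monotone w) (h : Fin (m + 1) → V → ℝ) :
    walkExp A (fun y => ∏ j, h j (y (w j))) =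
      (∑ v, chainVec A m (fun j => w j) h v) / Fintype.card V := by
  obtain ⟨n, rfl⟩ : ∃ n', n = n' + 1 := ⟨n - 1, by have := (w 0).pos; omega⟩
  have hA1 := mulVec_one_of_mem_doublyStochastic hA
  set p : Fin (m + 1) → ℕ := fun j => w j
  have hp : Monotone p := fun i j hij => hw hij
  have hbefore : ∀ i < p 0, monomialWeight p h i = 1 := fun i hi =>
    monomialWeight_eq_one h fun j => by have := hp (Fin.zero_le j); omega
  have hstrip : transfer A (n + 1) (monomialWeight p h) =
      A ^ p 0 *ᵥ transfer A (n + 1 - p 0) (fun i => monomialWeight p h (i + p 0)) := by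
    rw [← transfer_add_of_eq_one A hbefore]
    congr 1
    have : p 0 < n + 1 := (w 0).is_lt
    omega
  simp only [prod_eq_prod_monomialWeight w h]
  rw [walkExp_prod_eq_transfer hA1, hstrip, sum_mulVec_of_mem_doublyStochastic (pow_mem hA _),
    transfer_monomialWeight_eq_chainVec hA1 m hp h
      (by have : p (Fin.last m) < n + 1 := (w (Fin.last m)).is_lt; omega)]

noncomputable def blockChainVec (A : Matrix V V ℝ) :
    (m : ℕ) → (Fin (m + 1) → ℕ) → (Fin (m + 1) → V → ℝ) → V → ℝ
  | 0, _, s => s 0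
  | m + 1, p, s => (diagonal (s 0) * A ^ (p 1 - p 0) * diagonal (s 1)) *ᵥ
      blockChainVec A m (Fin.tail p) (Fin.tail s)

lemma chainVec_mul_self (A : Matrix V V ℝ) (m : ℕ) (p : Fin (m + 1) → ℕ)
    (s : Fin (m + 1) → V → ℝ) :
    chainVec A m p (fun j => s j * s j) = s 0 * blockChainVec A m p s := by
  induction m with
  | zero => rfl
  | succ m ih =>
    have hdiag : ∀ x y : V → ℝ, diagonal x *ᵥ y = x * y := fun x y =>
      funext (mulVec_diagonal x y)
    rw [chainVec, blockChainVec, ← mulVec_mulVec, ← mulVec_mulVec, hdiag, hdiag, mul_assoc]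
    congr 3
    exact ih (Fin.tail p) (Fin.tail s)

lemma norm_blockChainVec_le (A : Matrix V V ℝ) (m : ℕ) (p : Fin (m + 1) → ℕ)
    (s : Fin (m + 1) → V → ℝ) :
    ‖toLp 2 (blockChainVec A m p s)‖ ≤
      (∏ i : Fin m, ‖diagonal (s i.castSucc) * A ^ (p i.succ - p i.castSucc) *
        diagonal (s i.succ)‖) * ‖toLp 2 (s (Fin.last m))‖ := by
  induction m with
  | zero => simp [blockChainVec]
  | succ m ih =>
    rw [Fin.prod_univ_succ, mul_assoc]
    exact (l2_opNorm_mulVec _ (toLp 2 _)).trans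
      (mul_le_mul_of_nonneg_left (ih (Fin.tail p) (Fin.tail s)) (norm_nonneg _))

variable {A : Matrix V V ℝ}

lemma walkExp_prod_mul_self_le (hA : A ∈ doublyStochastic ℝ V) {n m : ℕ}
    {w : Fin (m + 1) → Fin n} (hw : Monotone w) (s : Fin (m + 1) → V → ℝ) :
    walkExp A (fun y => ∏ j, s j (y (w j)) * s j (y (w j))) ≤
      ‖toLp 2 (s 0)‖ * ‖toLp 2 (s (Fin.last m))‖ / Fintype.card V *
        ∏ i : Fin m, ‖diagonal (s i.castSucc) * A ^ ((w i.succ : ℕ) - w i.castSucc) *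
          diagonal (s i.succ)‖ := by
  refine (walkExp_prod_eq_chainVec hA hw (fun j => s j * s j)).trans_le ?_
  rw [chainVec_mul_self]
  calc _ ≤ ‖toLp 2 (s 0)‖ * ‖toLp 2 (blockChainVec A m (fun j => w j) s)‖ /
        Fintype.card V := by
        gcongr
        exact sum_mul_le_norm_toLp_mul_norm_toLp _ _
    _ ≤ ‖toLp 2 (s 0)‖ * ((∏ i : Fin m, ‖diagonal (s i.castSucc) *
          A ^ ((w i.succ : ℕ) - w i.castSucc) * diagonal (s i.succ)‖) *
          ‖toLp 2 (s (Fin.last m))‖) / Fintype.card V := by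
        gcongr
        exact norm_blockChainVec_le A m _ s
    _ = _ := by ring

lemma mul_averagingMatrix (hA : A ∈ doublyStochastic ℝ V) :
    A * averagingMatrix V = averagingMatrix V := by
  ext u v
  simp only [averagingMatrix, mul_apply, of_apply, ← sum_mul,
    sum_row_of_mem_doublyStochastic hA, one_mul]

lemma averagingMatrix_mul (hA : A ∈ doublyStochastic ℝ V) :
    averagingMatrix V * A = averagingMatrix V := by
  ext u v
  simp only [averagingMatrix, mul_apply, of_apply, ← mul_sum,
    sum_col_of_mem_doublyStochastic hA, mul_one]

lemma norm_diagonal_mul_averagingMatrix_mul_diagonal_le (a b : V → ℝ) :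
    ‖diagonal a * averagingMatrix V * diagonal b‖ ≤
      ‖toLp 2 a‖ * ‖toLp 2 b‖ / Fintype.card V := by
  rw [cstar_norm_def]
  refine ContinuousLinearMap.opNorm_le_bound _ (by positivity) fun x => ?_
  have hx : toEuclideanCLM (𝕜 := ℝ) (diagonal a * averagingMatrix V * diagonal b) x =
      (⟪toLp 2 b, x⟫_ℝ / Fintype.card V) • toLp 2 a := by
    ext u
    simp [mulVec, dotProduct, averagingMatrix, diagonal, PiLp.inner_apply, mul_sum,
      div_eq_mul_inv, mul_comm, mul_left_comm]
  rw [hx, norm_smul, Real.norm_eq_abs, abs_div, Nat.abs_cast]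
  calc |⟪toLp 2 b, x⟫_ℝ| / Fintype.card V * ‖toLp 2 a‖
      ≤ ‖toLp 2 b‖ * ‖x‖ / Fintype.card V * ‖toLp 2 a‖ := by
        gcongr
        exact abs_real_inner_le_norm _ _
    _ = ‖toLp 2 a‖ * ‖toLp 2 b‖ / Fintype.card V * ‖x‖ := by ring

variable [Nonempty V]

lemma norm_sub_averagingMatrix_le_one (hA : A ∈ doublyStochastic ℝ V) :
    ‖A - averagingMatrix V‖ ≤ 1 :=
  calc ‖A - averagingMatrix V‖ = ‖A * (1 - averagingMatrix V)‖ := by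
        rw [mul_sub, mul_one, mul_averagingMatrix hA]
    _ ≤ ‖A‖ * ‖1 - averagingMatrix V‖ := norm_mul_le _ _
    _ ≤ 1 * 1 := by
      gcongr
      · exact l2_opNorm_le_one_of_mem_doublyStochastic hA
      · exact isStarProjection_averagingMatrix.one_sub.norm_le
    _ = 1 := one_mul 1

lemma sub_averagingMatrix_pow (hA : A ∈ doublyStochastic ℝ V) {t : ℕ} (ht : t ≠ 0) :
    (A - averagingMatrix V) ^ t = A ^ t - averagingMatrix V := by
  induction t with
  | zero => exact absurd rfl ht
  | succ t ih =>
    rcases eq_or_ne t 0 with rfl | ht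
    · simp
    rw [pow_succ, ih ht, sub_mul, mul_sub, mul_sub, ← pow_succ,
      mul_averagingMatrix (pow_mem hA t), averagingMatrix_mul hA,
      isStarProjection_averagingMatrix.isIdempotentElem.eq]
    abel

lemma norm_pow_sub_smul_averagingMatrix_le (hA : A ∈ doublyStochastic ℝ V) (t : ℕ) :
    ‖A ^ t - (1 - ‖A - averagingMatrix V‖ ^ t) • averagingMatrix V‖ ≤
      ‖A - averagingMatrix V‖ ^ t := by
  rcases eq_or_ne t 0 with rfl | ht
  · simp
  have hJ := isStarProjection_averagingMatrix (V := V)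
  have hdecomp : A ^ t - (1 - ‖A - averagingMatrix V‖ ^ t) • averagingMatrix V =
      (A - averagingMatrix V) ^ t + ‖A - averagingMatrix V‖ ^ t • averagingMatrix V := by
    rw [sub_averagingMatrix_pow hA ht, sub_smul, one_smul]
    abel
  rw [hdecomp]
  refine l2_opNorm_add_smul_le_of_isStarProjection hJ ?_ ?_
    (norm_pow_le' _ (Nat.pos_of_ne_zero ht))
  · rw [sub_averagingMatrix_pow hA ht, sub_mul, mul_averagingMatrix (pow_mem hA t),
      hJ.isIdempotentElem.eq, sub_self]
  · rw [sub_averagingMatrix_pow hA ht, mul_sub, averagingMatrix_mul (pow_mem hA t),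
      hJ.isIdempotentElem.eq, sub_self]

lemma norm_diagonal_mul_pow_mul_diagonal_le (hA : A ∈ doublyStochastic ℝ V) {a b : V → ℝ}
    (ha : ‖a‖ ≤ 1) (hb : ‖b‖ ≤ 1) (t : ℕ) :
    ‖diagonal a * A ^ t * diagonal b‖ ≤
      (1 - ‖A - averagingMatrix V‖ ^ t) * (‖toLp 2 a‖ * ‖toLp 2 b‖ / Fintype.card V) +
        ‖A - averagingMatrix V‖ ^ t := by
  set γ := ‖A - averagingMatrix V‖ ^ t
  have hγ : γ ≤ 1 := pow_le_one₀ (norm_nonneg _) (norm_sub_averagingMatrix_le_one hA)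
  have hdecomp : diagonal a * A ^ t * diagonal b =
      (1 - γ) • (diagonal a * averagingMatrix V * diagonal b) +
        diagonal a * (A ^ t - (1 - γ) • averagingMatrix V) * diagonal b := by
    rw [mul_sub, sub_mul, mul_smul_comm, smul_mul_assoc]
    abel
  rw [hdecomp]
  calc _ ≤ ‖(1 - γ) • (diagonal a * averagingMatrix V * diagonal b)‖ +
        ‖diagonal a‖ * ‖A ^ t - (1 - γ) • averagingMatrix V‖ * ‖diagonal b‖ :=
        (norm_add_le _ _).trans (add_le_add le_rfl (norm_mul₃_le ..))
    _ ≤ (1 - γ) * (‖toLp 2 a‖ * ‖toLp 2 b‖ / Fintype.card V) + 1 * γ * 1 := by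
      rw [norm_smul, Real.norm_of_nonneg (sub_nonneg.mpr hγ), l2_opNorm_diagonal,
        l2_opNorm_diagonal]
      gcongr
      · exact norm_diagonal_mul_averagingMatrix_mul_diagonal_le a b
      · exact norm_pow_sub_smul_averagingMatrix_le hA t
    _ = _ := by ring

end ExpanderWalk

open ExpanderWalk in
theorem expander_monomial_bound
    {V : Type*} [Fintype V] [DecidableEq V] [Nonempty V]
    (G : SimpleGraph V) [DecidableRel G.Adj] (d : ℕ) (hd : 0 < d)
    (hreg : G.IsRegularOfDegree d)
    (A : Matrix V V ℝ)
    (hA : ∀ u v, A u v = if G.Adj u v then (1 : ℝ) / d else 0)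
    (J : Matrix V V ℝ) (hJ : ∀ u v, J u v = 1 / (Fintype.card V : ℝ))
    (lam : ℝ) (hlam : lam = opNorm (A - J))
    (n : ℕ) (f : Fin n → V → ℝ) (hf : ∀ i v, f i v ∈ Set.Icc (0 : ℝ) 1)
    (μ : Fin n → ℝ) (hμ : ∀ i, μ i = (∑ v, f i v) / (Fintype.card V : ℝ))
    (m : ℕ) (w : Fin (m + 1) → Fin n) (hw : Monotone w) :
    walkExp A (fun y => ∏ j, f (w j) (y (w j))) ≤
      Real.sqrt (μ (w 0) * μ (w (Fin.last m))) *
        ∏ i : Fin m,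
          ((1 - lam ^ ((w i.succ : ℕ) - (w i.castSucc : ℕ))) *
              Real.sqrt (μ (w i.castSucc) * μ (w i.succ)) +
            lam ^ ((w i.succ : ℕ) - (w i.castSucc : ℕ))) := by
  have hds := hreg.mem_doublyStochastic hd hA
  obtain rfl : J = averagingMatrix V := Matrix.ext hJ
  obtain rfl : lam = ‖A - averagingMatrix V‖ := hlam
  set s : Fin (m + 1) → V → ℝ := fun j v => √(f (w j) v)
  have hs : ∀ j, ‖s j‖ ≤ 1 := fun j =>
    (pi_norm_le_iff_of_nonneg zero_le_one).mpr fun v => by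
      rw [Real.norm_of_nonneg (Real.sqrt_nonneg _)]
      exact Real.sqrt_le_one.mpr (hf _ v).2
  have hpair : ∀ a b, ‖toLp 2 (s a)‖ * ‖toLp 2 (s b)‖ / Fintype.card V =
      √(μ (w a) * μ (w b)) := fun a b => by
    have hnorm : ∀ j, ‖toLp 2 (s j)‖ = √(∑ v, f (w j) v) := fun j => by
      rw [norm_toLp_eq]
      exact congr_arg _ (sum_congr rfl fun v _ => Real.sq_sqrt (hf _ v).1)
    rw [hnorm, hnorm, hμ, hμ, ← Real.sqrt_mul (sum_nonneg fun v _ => (hf _ v).1),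
      div_mul_div_comm, Real.sqrt_div' _ (by positivity), Real.sqrt_mul_self (by positivity)]
  have hf_sq : ∀ j v, f (w j) v = s j v * s j v := fun j v =>
    (Real.mul_self_sqrt (hf _ v).1).symm
  simp only [hf_sq, ← hpair]
  refine (walkExp_prod_mul_self_le hds hw s).trans ?_
  gcongr with i
  exact norm_diagonal_mul_pow_mul_diagonal_le hds (hs _) (hs _) _
end

section
/- Let P ∈ ℝ[X_1, …, X_n] be a multivariate polynomial all of whose coefficients are nonnegative. Then for all real numbers x_1, …, x_n, y_1, …, y_n, P(x_1 y_1, x_2 y_2, …, x_n y_n) ≤ max{ P(x_1², x_2², …, x_n²), P(y_1², y_2², …, y_n²) }. -/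
theorem mvpoly_nonneg_coeff_cauchy_schwarz {n : ℕ}
    (P : MvPolynomial (Fin n) ℝ) (hP : ∀ m, 0 ≤ P.coeff m)
    (x y : Fin n → ℝ) :
    MvPolynomial.eval (fun i => x i * y i) P ≤
      max (MvPolynomial.eval (fun i => (x i) ^ 2) P)
        (MvPolynomial.eval (fun i => (y i) ^ 2) P) := by
  set A := MvPolynomial.eval (fun i => (x i) ^ 2) P with hA
  set B := MvPolynomial.eval (fun i => (y i) ^ 2) P with hB
  set C := MvPolynomial.eval (fun i => x i * y i) P with hC
  have hAnn : 0 ≤ A := by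
    rw [hA, MvPolynomial.eval_eq']
    exact Finset.sum_nonneg fun m _ => mul_nonneg (hP m)
      (Finset.prod_nonneg fun i _ => pow_nonneg (sq_nonneg _) _)
  have hBnn : 0 ≤ B := by
    rw [hB, MvPolynomial.eval_eq']
    exact Finset.sum_nonneg fun m _ => mul_nonneg (hP m)
      (Finset.prod_nonneg fun i _ => pow_nonneg (sq_nonneg _) _)
  have key : C ^ 2 ≤ A * B := by
    rw [hA, hB, hC, MvPolynomial.eval_eq', MvPolynomial.eval_eq', MvPolynomial.eval_eq']
    have h1 : ∀ m ∈ P.support,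
        P.coeff m * ∏ i, (x i * y i) ^ m i =
        (Real.sqrt (P.coeff m) * ∏ i, (x i) ^ m i) *
        (Real.sqrt (P.coeff m) * ∏ i, (y i) ^ m i) := by
      intro m _
      rw [mul_mul_mul_comm, Real.mul_self_sqrt (hP m)]
      congr 1
      rw [← Finset.prod_mul_distrib]
      exact Finset.prod_congr rfl fun i _ => mul_pow _ _ _
    have h2 : ∀ m ∈ P.support,
        P.coeff m * ∏ i, ((x i) ^ 2) ^ m i =
        (Real.sqrt (P.coeff m) * ∏ i, (x i) ^ m i) ^ 2 := by
      intro m _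
      rw [mul_pow, Real.sq_sqrt (hP m), ← Finset.prod_pow]
      congr 1
      exact Finset.prod_congr rfl fun i _ => by ring
    have h3 : ∀ m ∈ P.support,
        P.coeff m * ∏ i, ((y i) ^ 2) ^ m i =
        (Real.sqrt (P.coeff m) * ∏ i, (y i) ^ m i) ^ 2 := by
      intro m _
      rw [mul_pow, Real.sq_sqrt (hP m), ← Finset.prod_pow]
      congr 1
      exact Finset.prod_congr rfl fun i _ => by ring
    rw [Finset.sum_congr rfl h1, Finset.sum_congr rfl h2, Finset.sum_congr rfl h3]
    exact Finset.sum_mul_sq_le_sq_mul_sq _ _ _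
  have hAB : A * B ≤ (max A B) ^ 2 := by
    calc A * B ≤ max A B * max A B :=
          mul_le_mul (le_max_left _ _) (le_max_right _ _) hBnn (le_trans hAnn (le_max_left _ _))
      _ = (max A B) ^ 2 := (sq _).symm
  have hmax : 0 ≤ max A B := le_trans hAnn (le_max_left _ _)
  nlinarith [sq_nonneg (C - max A B), sq_nonneg (C + max A B)]
end

section
/- Let 0 ≤ λ < 1, let μ_1, …, μ_n ∈ [0, 1], let Φ = μ_1 + ⋯ + μ_n, let k ≥ 1, and let W_k ⊆ [n]^k be the set of strictly increasing tuples w_1 < ⋯ < w_k. Then for every s ∈ {0,1}^{k−1}, denoting by |s| the number of coordinates of s equal to 1, Σ_{w ∈ W_k} μ_{w_k} · (∏_{i : s_i = 0} μ_{w_i}) · (∏_{i : s_i = 1} λ^{w_{i+1} − w_i}) ≤ Φ^{k−|s|} λ^{|s|} / ((k−|s|)! (1−λ)^{|s|}). -/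
open Finset
open scoped Classical

lemma aux_pow (a d : ℝ) (ha : 0 ≤ a) (hd : 0 ≤ d) (r : ℕ) :
    a ^ (r+1) + (r+1) * a ^ r * d ≤ (a + d) ^ (r+1) := by
  induction r with
  | zero => simp
  | succ r ih =>
      have hx : 0 ≤ a ^ r := pow_nonneg ha r
      have hr : (0:ℝ) ≤ (r:ℝ) := Nat.cast_nonneg r
      have e1 : a ^ (r+1) = a ^ r * a := pow_succ a r
      have e2 : a ^ (r+2) = a ^ (r+1) * a := pow_succ a (r+1)
      have h2 : (a+d) * (a ^ (r+1) + (r+1) * a ^ r * d) ≤ (a+d) * (a + d)^(r+1) :=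
        mul_le_mul_of_nonneg_left ih (by linarith)
      have h1 : (a + d) ^ (r+2) = (a+d) * (a+d)^(r+1) := by ring
      have h3 : a ^ (r+2) + ((r:ℝ)+2) * a ^ (r+1) * d ≤ (a+d) * (a ^ (r+1) + (r+1) * a ^ r * d) := by
        have expand : (a+d) * (a ^ (r+1) + ((r:ℝ)+1) * a ^ r * d) - (a ^ (r+2) + ((r:ℝ)+2) * a ^ (r+1) * d) = ((r:ℝ)+1) * a ^ r * (d^2) := by
          rw [e1, e2]; ring
        have hnn : 0 ≤ ((r:ℝ)+1) * a ^ r * (d^2) :=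
          mul_nonneg (mul_nonneg (by linarith) hx) (sq_nonneg d)
        linarith
      have : a ^ (r+2) + ((r:ℝ)+2) * a ^ (r+1) * d ≤ (a+d)^(r+2) := by
        rw [h1]; exact le_trans h3 h2
      push_cast
      push_cast at this
      linarith

lemma geom_aux (lam : ℝ) (hlam0 : 0 ≤ lam) (hlam1 : lam < 1) (c : ℕ) :
    ∑ i ∈ Finset.range c, lam ^ i ≤ 1 / (1 - lam) := by
  have h1 : (0:ℝ) < 1 - lam := by linarith
  have h2 : ∑ i ∈ Finset.range c, lam ^ i = (1 - lam ^ c) / (1 - lam) := by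
    rw [geom_sum_eq (ne_of_lt hlam1), ← neg_div_neg_eq]; ring_nf
  rw [h2]
  gcongr
  nlinarith [pow_nonneg hlam0 c]

lemma strictMono_snoc_iff {m n : ℕ} (u : Fin (m+1) → Fin n) (v : Fin n) :
    StrictMono (Fin.snoc u v : Fin (m+2) → Fin n) ↔ StrictMono u ∧ u (Fin.last m) < v := by
  rw [Fin.strictMono_iff_lt_succ, Fin.strictMono_iff_lt_succ]
  constructor
  · intro h
    refine ⟨fun i => ?_, ?_⟩
    · have := h i.castSucc
      rwa [Fin.succ_castSucc, Fin.snoc_castSucc, Fin.snoc_castSucc] at this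
    · have := h (Fin.last m)
      rwa [Fin.succ_last, Fin.snoc_last, Fin.snoc_castSucc] at this
  · rintro ⟨h1, h2⟩ i
    induction i using Fin.lastCases with
    | last => simpa [Fin.succ_last] using h2
    | cast j =>
      have := h1 j
      rwa [Fin.succ_castSucc, Fin.snoc_castSucc, Fin.snoc_castSucc]

lemma peel {n m : ℕ} (c : ℕ) (f : (Fin (m+2) → Fin n) → ℝ) :
    ∑ w ∈ univ.filter (fun w : Fin (m+2) → Fin n =>
        StrictMono w ∧ ((w (Fin.last (m+1)) : ℕ) < c)), f w
    = ∑ v ∈ univ.filter (fun v : Fin n => (v:ℕ) < c),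
        ∑ u ∈ univ.filter (fun u : Fin (m+1) → Fin n =>
          StrictMono u ∧ ((u (Fin.last m) : ℕ) < (v:ℕ))), f (Fin.snoc u v) := by
  classical
  rw [Finset.sum_sigma']
  refine Finset.sum_bij' (fun w _ => (⟨w (Fin.last (m+1)), fun i => w i.castSucc⟩ :
      Σ _v : Fin n, Fin (m+1) → Fin n))
    (fun p _ => Fin.snoc p.2 p.1) ?_ ?_ ?_ ?_ ?_
  · intro w hw
    simp only [Finset.mem_filter, Finset.mem_univ, true_and] at hw
    simp only [Finset.mem_sigma, Finset.mem_filter, Finset.mem_univ, true_and]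
    refine ⟨hw.2, ?_, ?_⟩
    · exact fun i j hij => hw.1 (by exact_mod_cast Fin.castSucc_lt_castSucc_iff.mpr hij)
    · exact_mod_cast hw.1 (Fin.castSucc_lt_last (Fin.last m))
  · intro p hp
    simp only [Finset.mem_sigma, Finset.mem_filter, Finset.mem_univ, true_and] at hp
    simp only [Finset.mem_filter, Finset.mem_univ, true_and]
    constructor
    · exact (strictMono_snoc_iff p.2 p.1).mpr ⟨hp.2.1, by exact_mod_cast hp.2.2⟩
    · simpa using hp.1
  · intro w hw
    exact Fin.snoc_init_self w
  · intro p hp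
    refine Sigma.ext ?_ ?_
    · simp
    · simp only [Fin.snoc_last]
      refine heq_of_eq ?_
      funext i
      simp [Fin.snoc_castSucc]
  · intro w hw
    congr 1
    exact (Fin.snoc_init_self w).symm

lemma geom_filtered (lam : ℝ) (hlam0 : 0 ≤ lam) (hlam1 : lam < 1) (n c : ℕ) :
    ∑ v ∈ univ.filter (fun v : Fin n => (v:ℕ) < c), lam ^ (c - (v:ℕ))
      ≤ lam / (1 - lam) := by
  classical
  have h1 : ∑ v ∈ univ.filter (fun v : Fin n => (v:ℕ) < c), lam ^ (c - (v:ℕ))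
      = ∑ j ∈ (univ.filter (fun v : Fin n => (v:ℕ) < c)).image Fin.val, lam ^ (c - j) := by
    rw [Finset.sum_image]
    intro x _ y _ h
    exact Fin.val_injective h
  have h2 : (univ.filter (fun v : Fin n => (v:ℕ) < c)).image Fin.val ⊆ Finset.range c := by
    intro j hj
    simp only [Finset.mem_image, Finset.mem_filter] at hj
    obtain ⟨v, hv, rfl⟩ := hj
    exact Finset.mem_range.mpr hv.2
  have h3 : ∑ j ∈ (univ.filter (fun v : Fin n => (v:ℕ) < c)).image Fin.val, lam ^ (c - j)
      ≤ ∑ j ∈ Finset.range c, lam ^ (c - j) :=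
    Finset.sum_le_sum_of_subset_of_nonneg h2 (fun j _ _ => pow_nonneg hlam0 _)
  have h4 : ∑ j ∈ Finset.range c, lam ^ (c - j) = ∑ j ∈ Finset.range c, lam ^ (j + 1) := by
    rw [← Finset.sum_range_reflect]
    apply Finset.sum_congr rfl
    intro j hj
    simp only [Finset.mem_range] at hj
    congr 1
    omega
  have h5 : ∑ j ∈ Finset.range c, lam ^ (j + 1) = lam * ∑ j ∈ Finset.range c, lam ^ j := by
    rw [Finset.mul_sum]
    exact Finset.sum_congr rfl fun j _ => by ring
  have h6 : lam * ∑ j ∈ Finset.range c, lam ^ j ≤ lam * (1 / (1 - lam)) :=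
    mul_le_mul_of_nonneg_left (geom_aux lam hlam0 hlam1 c) hlam0
  have : lam * (1 / (1 - lam)) = lam / (1 - lam) := by ring
  linarith [h1, h3, h4, h5, h6, this]

lemma tel {n : ℕ} (μ : Fin n → ℝ) (hμ0 : ∀ i, 0 ≤ μ i) (r : ℕ) (c : ℕ) :
    ((r:ℝ)+1) * ∑ v ∈ univ.filter (fun v : Fin n => (v:ℕ) < c),
      μ v * (∑ i ∈ univ.filter (fun i : Fin n => (i:ℕ) < (v:ℕ)), μ i) ^ r
    ≤ (∑ i ∈ univ.filter (fun i : Fin n => (i:ℕ) < c), μ i) ^ (r+1) := by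
  classical
  induction c with
  | zero =>
      have he : univ.filter (fun v : Fin n => (v:ℕ) < 0) = ∅ := by
        apply Finset.filter_false_of_mem; intro v _; omega
      simp [he]
  | succ c ihc =>
      by_cases hc : c < n
      · have hsplit : univ.filter (fun v : Fin n => (v:ℕ) < c + 1)
            = insert (⟨c, hc⟩ : Fin n) (univ.filter (fun v : Fin n => (v:ℕ) < c)) := by
          ext v
          simp only [Finset.mem_filter, Finset.mem_univ, true_and, Finset.mem_insert,
            Fin.ext_iff]
          omega
        have hnm : (⟨c, hc⟩ : Fin n) ∉ univ.filter (fun v : Fin n => (v:ℕ) < c) := by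
          simp
        have hΦnn : 0 ≤ ∑ i ∈ univ.filter (fun i : Fin n => (i:ℕ) < c), μ i :=
          Finset.sum_nonneg fun i _ => hμ0 i
        rw [hsplit, Finset.sum_insert hnm, Finset.sum_insert hnm]
        have haux := aux_pow (∑ i ∈ univ.filter (fun i : Fin n => (i:ℕ) < c), μ i)
          (μ ⟨c, hc⟩) hΦnn (hμ0 _) r
        have hcomm : (μ (⟨c, hc⟩ : Fin n) + ∑ i ∈ univ.filter (fun i : Fin n => (i:ℕ) < c), μ i) ^ (r+1)
            = (∑ i ∈ univ.filter (fun i : Fin n => (i:ℕ) < c), μ i + μ (⟨c, hc⟩ : Fin n)) ^ (r+1) := by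
          rw [add_comm]
        push_cast at haux hcomm ⊢
        nlinarith [ihc, haux, hcomm]
      · have hsame : univ.filter (fun v : Fin n => (v:ℕ) < c + 1)
            = univ.filter (fun v : Fin n => (v:ℕ) < c) := by
          ext v
          simp only [Finset.mem_filter, Finset.mem_univ, true_and]
          have := v.is_lt
          omega
        rw [hsame]
        exact ihc

lemma key (lam : ℝ) (hlam0 : 0 ≤ lam) (hlam1 : lam < 1)
    {n : ℕ} (μ : Fin n → ℝ) (hμ0 : ∀ i, 0 ≤ μ i) :
    ∀ (m : ℕ) (s : Fin m → Bool) (b : Bool) (c : ℕ),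
    ∑ w ∈ univ.filter (fun w : Fin (m+1) → Fin n =>
        StrictMono w ∧ ((w (Fin.last m) : ℕ) < c)),
      ((if b then lam ^ (c - (w (Fin.last m) : ℕ)) else μ (w (Fin.last m))) *
        ∏ j : Fin m, (if s j then lam ^ ((w j.succ : ℕ) - (w j.castSucc : ℕ))
          else μ (w j.castSucc)))
    ≤ (∑ i ∈ univ.filter (fun i : Fin n => (i:ℕ) < c), μ i) ^
        (m + 1 - ((univ.filter (fun i : Fin m => s i = true)).card + (if b then 1 else 0))) *
        lam ^ ((univ.filter (fun i : Fin m => s i = true)).card + (if b then 1 else 0)) /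
        ((Nat.factorial (m + 1 - ((univ.filter (fun i : Fin m => s i = true)).card
            + (if b then 1 else 0))) : ℝ) *
          (1 - lam) ^ ((univ.filter (fun i : Fin m => s i = true)).card
            + (if b then 1 else 0))) := by
  intro m
  induction m with
  | zero =>
      intro s b c
      have hcard : (univ.filter (fun i : Fin 0 => s i = true)).card = 0 := by simp
      have hreindex : ∑ w ∈ univ.filter (fun w : Fin 1 → Fin n =>
            StrictMono w ∧ ((w (Fin.last 0) : ℕ) < c)),
          ((if b then lam ^ (c - (w (Fin.last 0) : ℕ)) else μ (w (Fin.last 0))) *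
            ∏ j : Fin 0, (if s j then lam ^ ((w j.succ : ℕ) - (w j.castSucc : ℕ))
              else μ (w j.castSucc)))
          = ∑ v ∈ univ.filter (fun v : Fin n => (v:ℕ) < c),
              (if b then lam ^ (c - (v:ℕ)) else μ v) := by
        refine Finset.sum_bij' (fun w _ => w (Fin.last 0)) (fun v _ => fun _ => v)
          ?_ ?_ ?_ ?_ ?_
        · intro w hw
          simp only [Finset.mem_filter, Finset.mem_univ, true_and] at hw ⊢
          exact hw.2
        · intro v hv
          simp only [Finset.mem_filter, Finset.mem_univ, true_and] at hv ⊢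
          exact ⟨Subsingleton.strictMono _, hv⟩
        · intro w hw
          funext i
          exact congrArg w (Subsingleton.elim _ _)
        · intro v hv
          rfl
        · intro w hw
          simp
      rw [hreindex, hcard]
      cases b
      · simp only [Bool.false_eq_true, if_false]
        have : (0:ℕ) + 1 - (0 + 0) = 1 := rfl
        simp [Nat.factorial]
      · simp only [if_true]
        have h := geom_filtered lam hlam0 hlam1 n c
        simp [Nat.factorial]
        calc ∑ v ∈ univ.filter (fun v : Fin n => (v:ℕ) < c), lam ^ (c - (v:ℕ))
            ≤ lam / (1 - lam) := h
          _ = lam / (1 - lam) := rfl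
  | succ m ihm =>
      intro s b c
      have hone : (0:ℝ) < 1 - lam := by linarith
      -- abbreviations (as plain expressions)
      have ht'le : (univ.filter (fun j : Fin m => s j.castSucc = true)).card ≤ m := by
        calc (univ.filter (fun j : Fin m => s j.castSucc = true)).card
            ≤ (univ : Finset (Fin m)).card := Finset.card_filter_le _ _
          _ = m := by simp
      have hind : (if s (Fin.last m) = true then 1 else 0) ≤ 1 := by split <;> omega
      have htS : (univ.filter (fun i : Fin (m+1) => s i = true)).card
          = (univ.filter (fun j : Fin m => s j.castSucc = true)).card
            + (if s (Fin.last m) = true then 1 else 0) := by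
        rw [Finset.card_filter, Fin.sum_univ_castSucc, ← Finset.card_filter]
      -- peel the last coordinate
      have hpeel : ∑ w ∈ univ.filter (fun w : Fin (m+1+1) → Fin n =>
            StrictMono w ∧ ((w (Fin.last (m+1)) : ℕ) < c)),
          ((if b then lam ^ (c - (w (Fin.last (m+1)) : ℕ)) else μ (w (Fin.last (m+1)))) *
            ∏ j : Fin (m+1), (if s j then lam ^ ((w j.succ : ℕ) - (w j.castSucc : ℕ))
              else μ (w j.castSucc)))
          = ∑ v ∈ univ.filter (fun v : Fin n => (v:ℕ) < c),
              (if b then lam ^ (c - (v:ℕ)) else μ v) *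
              ∑ u ∈ univ.filter (fun u : Fin (m+1) → Fin n =>
                  StrictMono u ∧ ((u (Fin.last m) : ℕ) < (v:ℕ))),
                ((if s (Fin.last m) then lam ^ ((v:ℕ) - (u (Fin.last m) : ℕ))
                    else μ (u (Fin.last m))) *
                  ∏ j : Fin m, (if s j.castSucc then
                      lam ^ ((u j.succ : ℕ) - (u j.castSucc : ℕ))
                    else μ (u j.castSucc))) := by
        rw [peel c]
        refine Finset.sum_congr rfl fun v hv => ?_
        rw [Finset.mul_sum]
        refine Finset.sum_congr rfl fun u hu => ?_
        rw [Fin.prod_univ_castSucc]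
        simp only [Fin.snoc_last, Fin.snoc_castSucc, Fin.succ_castSucc, Fin.succ_last]
        ring
      -- the inner bound from the induction hypothesis
      have hIH : ∀ v : Fin n,
          ∑ u ∈ univ.filter (fun u : Fin (m+1) → Fin n =>
              StrictMono u ∧ ((u (Fin.last m) : ℕ) < (v:ℕ))),
            ((if s (Fin.last m) then lam ^ ((v:ℕ) - (u (Fin.last m) : ℕ))
                else μ (u (Fin.last m))) *
              ∏ j : Fin m, (if s j.castSucc then
                  lam ^ ((u j.succ : ℕ) - (u j.castSucc : ℕ))
                else μ (u j.castSucc)))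
          ≤ (∑ i ∈ univ.filter (fun i : Fin n => (i:ℕ) < (v:ℕ)), μ i) ^
              (m + 1 - ((univ.filter (fun j : Fin m => s j.castSucc = true)).card
                + (if s (Fin.last m) = true then 1 else 0))) *
              lam ^ ((univ.filter (fun j : Fin m => s j.castSucc = true)).card
                + (if s (Fin.last m) = true then 1 else 0)) /
              ((Nat.factorial (m + 1 - ((univ.filter (fun j : Fin m => s j.castSucc = true)).card
                  + (if s (Fin.last m) = true then 1 else 0))) : ℝ) *
                (1 - lam) ^ ((univ.filter (fun j : Fin m => s j.castSucc = true)).card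
                  + (if s (Fin.last m) = true then 1 else 0))) :=
        fun v => ihm (fun j => s j.castSucc) (s (Fin.last m)) (v:ℕ)
      set t' := (univ.filter (fun j : Fin m => s j.castSucc = true)).card with ht'def
      set dd := (if s (Fin.last m) = true then 1 else 0) with hdddef
      have hΦnn : ∀ d : ℕ, 0 ≤ ∑ i ∈ univ.filter (fun i : Fin n => (i:ℕ) < d), μ i :=
        fun d => Finset.sum_nonneg fun i _ => hμ0 i
      have hDpos : (0:ℝ) < (Nat.factorial (m + 1 - (t' + dd)) : ℝ) * (1 - lam) ^ (t' + dd) :=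
        mul_pos (by exact_mod_cast Nat.factorial_pos _) (pow_pos hone _)
      have hstep1 : ∑ w ∈ univ.filter (fun w : Fin (m+1+1) → Fin n =>
            StrictMono w ∧ ((w (Fin.last (m+1)) : ℕ) < c)),
          ((if b then lam ^ (c - (w (Fin.last (m+1)) : ℕ)) else μ (w (Fin.last (m+1)))) *
            ∏ j : Fin (m+1), (if s j then lam ^ ((w j.succ : ℕ) - (w j.castSucc : ℕ))
              else μ (w j.castSucc)))
          ≤ ∑ v ∈ univ.filter (fun v : Fin n => (v:ℕ) < c),
              (if b then lam ^ (c - (v:ℕ)) else μ v) *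
              ((∑ i ∈ univ.filter (fun i : Fin n => (i:ℕ) < (v:ℕ)), μ i) ^ (m + 1 - (t' + dd)) *
                lam ^ (t' + dd) /
                ((Nat.factorial (m + 1 - (t' + dd)) : ℝ) * (1 - lam) ^ (t' + dd))) := by
        rw [hpeel]
        refine Finset.sum_le_sum fun v hv => ?_
        refine mul_le_mul_of_nonneg_left (hIH v) ?_
        split
        · exact pow_nonneg hlam0 _
        · exact hμ0 v
      rw [htS]
      cases b
      · -- b = false
        simp only [Bool.false_eq_true, if_false, add_zero] at hstep1 ⊢
        refine le_trans hstep1 ?_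
        have hsub : m + 1 + 1 - (t' + dd) = (m + 1 - (t' + dd)) + 1 := by omega
        rw [hsub]
        have hrw : ∑ v ∈ univ.filter (fun v : Fin n => (v:ℕ) < c),
              μ v * ((∑ i ∈ univ.filter (fun i : Fin n => (i:ℕ) < (v:ℕ)), μ i) ^ (m + 1 - (t' + dd)) *
                lam ^ (t' + dd) /
                ((Nat.factorial (m + 1 - (t' + dd)) : ℝ) * (1 - lam) ^ (t' + dd)))
            = (∑ v ∈ univ.filter (fun v : Fin n => (v:ℕ) < c),
                μ v * (∑ i ∈ univ.filter (fun i : Fin n => (i:ℕ) < (v:ℕ)), μ i) ^ (m + 1 - (t' + dd))) *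
              (lam ^ (t' + dd) /
                ((Nat.factorial (m + 1 - (t' + dd)) : ℝ) * (1 - lam) ^ (t' + dd))) := by
          rw [Finset.sum_mul]
          exact Finset.sum_congr rfl fun v hv => by ring
        rw [hrw]
        have htel := tel μ hμ0 (m + 1 - (t' + dd)) c
        have hK : 0 ≤ lam ^ (t' + dd) /
            ((Nat.factorial (m + 1 - (t' + dd)) : ℝ) * (1 - lam) ^ (t' + dd)) :=
          div_nonneg (pow_nonneg hlam0 _) hDpos.le
        have h7 : (∑ v ∈ univ.filter (fun v : Fin n => (v:ℕ) < c),
              μ v * (∑ i ∈ univ.filter (fun i : Fin n => (i:ℕ) < (v:ℕ)), μ i) ^ (m + 1 - (t' + dd)))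
            ≤ (∑ i ∈ univ.filter (fun i : Fin n => (i:ℕ) < c), μ i) ^ ((m + 1 - (t' + dd)) + 1) /
              ((((m + 1 - (t' + dd) : ℕ)) : ℝ) + 1) := by
          rw [le_div_iff₀ (by positivity)]
          calc (∑ v ∈ univ.filter (fun v : Fin n => (v:ℕ) < c),
                μ v * (∑ i ∈ univ.filter (fun i : Fin n => (i:ℕ) < (v:ℕ)), μ i) ^ (m + 1 - (t' + dd))) *
                ((((m + 1 - (t' + dd) : ℕ)) : ℝ) + 1)
              = ((((m + 1 - (t' + dd) : ℕ)) : ℝ) + 1) *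
                (∑ v ∈ univ.filter (fun v : Fin n => (v:ℕ) < c),
                  μ v * (∑ i ∈ univ.filter (fun i : Fin n => (i:ℕ) < (v:ℕ)), μ i) ^ (m + 1 - (t' + dd))) := by
                ring
            _ ≤ _ := htel
        calc _ ≤ ((∑ i ∈ univ.filter (fun i : Fin n => (i:ℕ) < c), μ i) ^ ((m + 1 - (t' + dd)) + 1) /
              ((((m + 1 - (t' + dd) : ℕ)) : ℝ) + 1)) *
              (lam ^ (t' + dd) /
                ((Nat.factorial (m + 1 - (t' + dd)) : ℝ) * (1 - lam) ^ (t' + dd))) :=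
            mul_le_mul_of_nonneg_right h7 hK
          _ = _ := by
            have hfne : ((Nat.factorial (m + 1 - (t' + dd)) : ℝ)) ≠ 0 :=
              Nat.cast_ne_zero.mpr (Nat.factorial_ne_zero _)
            have h1l : (1 : ℝ) - lam ≠ 0 := ne_of_gt hone
            rw [Nat.factorial_succ]
            push_cast
            rw [div_mul_div_comm]
            congr 1 <;> ring
      · -- b = true
        simp only [if_true] at hstep1 ⊢
        refine le_trans hstep1 ?_
        have hsub2 : m + 1 + 1 - (t' + dd + 1) = m + 1 - (t' + dd) := by omega
        rw [hsub2]
        have hBBc_nn : 0 ≤ (∑ i ∈ univ.filter (fun i : Fin n => (i:ℕ) < c), μ i) ^ (m + 1 - (t' + dd)) *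
            lam ^ (t' + dd) /
            ((Nat.factorial (m + 1 - (t' + dd)) : ℝ) * (1 - lam) ^ (t' + dd)) :=
          div_nonneg (mul_nonneg (pow_nonneg (hΦnn c) _) (pow_nonneg hlam0 _)) hDpos.le
        calc ∑ v ∈ univ.filter (fun v : Fin n => (v:ℕ) < c),
              lam ^ (c - (v:ℕ)) *
              ((∑ i ∈ univ.filter (fun i : Fin n => (i:ℕ) < (v:ℕ)), μ i) ^ (m + 1 - (t' + dd)) *
                lam ^ (t' + dd) /
                ((Nat.factorial (m + 1 - (t' + dd)) : ℝ) * (1 - lam) ^ (t' + dd)))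
            ≤ ∑ v ∈ univ.filter (fun v : Fin n => (v:ℕ) < c),
              lam ^ (c - (v:ℕ)) *
              ((∑ i ∈ univ.filter (fun i : Fin n => (i:ℕ) < c), μ i) ^ (m + 1 - (t' + dd)) *
                lam ^ (t' + dd) /
                ((Nat.factorial (m + 1 - (t' + dd)) : ℝ) * (1 - lam) ^ (t' + dd))) := by
              refine Finset.sum_le_sum fun v hv => ?_
              refine mul_le_mul_of_nonneg_left ?_ (pow_nonneg hlam0 _)
              have hvc : (v:ℕ) < c := by
                simp only [Finset.mem_filter, Finset.mem_univ, true_and] at hv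
                exact hv
              have hsubset : univ.filter (fun i : Fin n => (i:ℕ) < (v:ℕ))
                  ⊆ univ.filter (fun i : Fin n => (i:ℕ) < c) := by
                intro i hi
                simp only [Finset.mem_filter, Finset.mem_univ, true_and] at hi ⊢
                omega
              have hmono : (∑ i ∈ univ.filter (fun i : Fin n => (i:ℕ) < (v:ℕ)), μ i)
                  ≤ ∑ i ∈ univ.filter (fun i : Fin n => (i:ℕ) < c), μ i :=
                Finset.sum_le_sum_of_subset_of_nonneg hsubset (fun i _ _ => hμ0 i)
              have hpow : (∑ i ∈ univ.filter (fun i : Fin n => (i:ℕ) < (v:ℕ)), μ i) ^ (m + 1 - (t' + dd))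
                  ≤ (∑ i ∈ univ.filter (fun i : Fin n => (i:ℕ) < c), μ i) ^ (m + 1 - (t' + dd)) :=
                pow_le_pow_left₀ (hΦnn _) hmono _
              exact (div_le_div_iff_of_pos_right hDpos).mpr
                (mul_le_mul_of_nonneg_right hpow (pow_nonneg hlam0 _))
          _ = (∑ v ∈ univ.filter (fun v : Fin n => (v:ℕ) < c), lam ^ (c - (v:ℕ))) *
              ((∑ i ∈ univ.filter (fun i : Fin n => (i:ℕ) < c), μ i) ^ (m + 1 - (t' + dd)) *
                lam ^ (t' + dd) /
                ((Nat.factorial (m + 1 - (t' + dd)) : ℝ) * (1 - lam) ^ (t' + dd))) := by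
              rw [Finset.sum_mul]
          _ ≤ (lam / (1 - lam)) *
              ((∑ i ∈ univ.filter (fun i : Fin n => (i:ℕ) < c), μ i) ^ (m + 1 - (t' + dd)) *
                lam ^ (t' + dd) /
                ((Nat.factorial (m + 1 - (t' + dd)) : ℝ) * (1 - lam) ^ (t' + dd))) :=
            mul_le_mul_of_nonneg_right (geom_filtered lam hlam0 hlam1 n c) hBBc_nn
          _ = _ := by
            have hfne : ((Nat.factorial (m + 1 - (t' + dd)) : ℝ)) ≠ 0 :=
              Nat.cast_ne_zero.mpr (Nat.factorial_ne_zero _)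
            have h1l : (1 : ℝ) - lam ≠ 0 := ne_of_gt hone
            rw [pow_succ lam (t' + dd), pow_succ (1 - lam) (t' + dd)]
            rw [div_mul_div_comm]
            congr 1 <;> ring

theorem increasing_tuple_weighted_sum_bound
    (lam : ℝ) (hlam0 : 0 ≤ lam) (hlam1 : lam < 1)
    (n : ℕ) (μ : Fin n → ℝ) (hμ : ∀ i, μ i ∈ Set.Icc (0 : ℝ) 1)
    (Φ : ℝ) (hΦ : Φ = ∑ i, μ i)
    (m : ℕ) (s : Fin m → Bool) :
    ∑ w ∈ univ.filter fun w : Fin (m + 1) → Fin n => StrictMono w,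
        μ (w (Fin.last m)) *
          (∏ i ∈ univ.filter fun i : Fin m => s i = false, μ (w i.castSucc)) *
          ∏ i ∈ univ.filter fun i : Fin m => s i = true,
            lam ^ ((w i.succ : ℕ) - (w i.castSucc : ℕ)) ≤
      Φ ^ (m + 1 - (univ.filter fun i : Fin m => s i = true).card) *
          lam ^ (univ.filter fun i : Fin m => s i = true).card /
        ((Nat.factorial (m + 1 - (univ.filter fun i : Fin m => s i = true).card) : ℝ) *
          (1 - lam) ^ (univ.filter fun i : Fin m => s i = true).card) := by
  classical
  have hμ0 : ∀ i, 0 ≤ μ i := fun i => (hμ i).1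
  have hkey := key lam hlam0 hlam1 μ hμ0 m s false n
  simp only [Bool.false_eq_true, if_false, add_zero] at hkey
  have hfilter : (univ.filter (fun w : Fin (m+1) → Fin n =>
        StrictMono w ∧ ((w (Fin.last m) : ℕ) < n)))
      = univ.filter (fun w : Fin (m+1) → Fin n => StrictMono w) := by
    apply Finset.filter_congr
    intro w _
    simp [Fin.is_lt]
  have hfull : (univ.filter (fun i : Fin n => (i:ℕ) < n)) = univ := by
    apply Finset.filter_true_of_mem
    intro i _
    exact i.is_lt
  rw [hfilter, hfull, ← hΦ] at hkey
  refine le_trans (le_of_eq ?_) hkey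
  apply Finset.sum_congr rfl
  intro w hw
  rw [Finset.prod_ite]
  simp only [Bool.not_eq_true]
  ring
end
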